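/- Let G be a finite bipartite multigraph (no loops), let k ≥ 0, and let i be an integer with 0 ≤ i ≤ k. Then 2·ν_k(G) ≥ ν_{k−i}(G) + ν_{k+i}(G), i.e., ν_k(G) ≥ (ν_{k−i}(G) + ν_{k+i}(G))/2. -/

import Mathlib

/-!
Orient every edge from the `false` side to the `true` side of the bipartition, so that the
multigraph becomes a pair of end maps `s false, s true : E → V` and the degree of a vertex in an
edge set is the size of a fibre of one of them. By König's edge-colouring theorem, an edge set is
`m`-edge-colourable iff all these fibres have at most `m` elements.

Let `A` be an optimal `(k - i)`-colourable and `B` an optimal `(k + i)`-colourable edge set, so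
`deg_A + deg_B ≤ 2k` at every vertex. Split the symmetric difference `D` of `A` and `B` into `C`
and `D \ C`, each taking at most half (rounded up) of the `D`-edges at every vertex. Since
`deg_D + 2 deg_{A ∩ B} = deg_A + deg_B`, both `A ∩ B ∪ C` and `A ∩ B ∪ (D \ C)` have maximum
degree at most `k`, so they are `k`-colourable, and their sizes add up to `|A| + |B|`.
-/

variable {V E : Type*}

/-- Degree of vertex `v` in the edge set `A` of a multigraph given by `ends`. -/
def degIn [DecidableEq V] (ends : E → Sym2 V) (A : Finset E) (v : V) : ℕ :=
  (A.filter (fun e => v ∈ ends e)).card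

/-- The edge set `A` admits a proper edge coloring with at most `k` colors:
adjacent (distinct, sharing an endpoint) edges get different colors. -/
def EdgeColorable (ends : E → Sym2 V) (A : Finset E) (k : ℕ) : Prop :=
  ∃ c : E → ℕ, (∀ e ∈ A, c e < k) ∧
    ∀ e₁ ∈ A, ∀ e₂ ∈ A, e₁ ≠ e₂ → (∃ v, v ∈ ends e₁ ∧ v ∈ ends e₂) → c e₁ ≠ c e₂

/-- `ν_k`: the maximum number of edges of a `k`-edge-colorable subgraph whose
edge set lies in `ground`. -/
noncomputable def nu (ends : E → Sym2 V) (ground : Finset E) (k : ℕ) : ℕ :=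
  sSup {n | ∃ F : Finset E, F ⊆ ground ∧ EdgeColorable ends F k ∧ F.card = n}

/-- The multigraph given by `ends` is bipartite. -/
def IsBipartite (ends : E → Sym2 V) : Prop :=
  ∃ f : V → Bool, ∀ e : E, ∀ u v : V, ends e = s(u, v) → f u ≠ f v

/-- There is an `A`-augmenting path: a simple path of odd length whose
odd-numbered (1st, 3rd, ...) edges lie outside `A`, whose even-numbered
(2nd, 4th, ...) edges belong to `A`, and whose endpoints have degree
at most `k - 1` in `A`. -/
def IsAugPath [DecidableEq V] (ends : E → Sym2 V) (A : Finset E) (k : ℕ) : Prop :=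
  ∃ (m : ℕ) (vs : Fin (m + 1) → V) (es : Fin m → E),
    Odd m ∧ Function.Injective vs ∧
    (∀ i : Fin m, ends (es i) = s(vs i.castSucc, vs i.succ)) ∧
    (∀ i : Fin m, (i : ℕ) % 2 = 0 → es i ∉ A) ∧
    (∀ i : Fin m, (i : ℕ) % 2 = 1 → es i ∈ A) ∧
    degIn ends A (vs 0) ≤ k - 1 ∧ degIn ends A (vs (Fin.last m)) ≤ k - 1

open Finset

section Hall

variable {F W : Type*} [DecidableEq W]

theorem exists_perfect_matching_of_regular [Finite W] (P Q : F → W) (A : Finset F) {k : ℕ}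
    (hk : 0 < k) (hP : ∀ w, #{a ∈ A | P a = w} = k) (hQ : ∀ w, #{a ∈ A | Q a = w} ≤ k) :
    ∃ g : W → F, (∀ w, g w ∈ A) ∧ (∀ w, P (g w) = w) ∧ (Q ∘ g).Bijective := by
  classical
  let nbhd (w : W) : Finset W := {a ∈ A | P a = w}.image Q
  have hall : ∀ S : Finset W, #S ≤ #(S.biUnion nbhd) := by
    intro S
    set edges := S.biUnion fun w => {a ∈ A | P a = w}
    have hcard : #edges = k * #S := by
      rw [card_biUnion, sum_const_nat fun w _ => hP w, mul_comm]
      intro w₁ _ w₂ _ hne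
      exact disjoint_filter.2 fun a _ h₁ h₂ => hne (h₁ ▸ h₂)
    have hmaps : ∀ a ∈ edges, Q a ∈ S.biUnion nbhd := by
      simp only [edges, nbhd, mem_biUnion]
      exact fun a ⟨w, hw, ha⟩ => ⟨w, hw, mem_image_of_mem Q ha⟩
    have hfib : ∀ w ∈ S.biUnion nbhd, #{a ∈ edges | Q a = w} ≤ k :=
      fun w _ => (card_le_card (filter_subset_filter _ (by simp [edges, subset_iff]))).trans (hQ w)
    have := card_le_mul_card_image_of_maps_to hmaps k hfib
    rw [hcard] at this
    exact Nat.le_of_mul_le_mul_left this hk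
  obtain ⟨q, hq_inj, hq⟩ := (all_card_le_biUnion_card_iff_exists_injective nbhd).1 hall
  have hq' : ∀ w, ∃ a, (a ∈ A ∧ P a = w) ∧ Q a = q w := by
    simpa only [nbhd, mem_image, mem_filter] using hq
  choose g hgAP hgQ using hq'
  refine ⟨g, fun w => (hgAP w).1, fun w => (hgAP w).2, ?_⟩
  have : Q ∘ g = q := funext hgQ
  rw [this]
  exact Finite.injective_iff_bijective.1 hq_inj

end Hall

section Konig

variable [DecidableEq V]

def regularizeEnd (s : Bool → E → V) (t : Bool) : (E × Bool) ⊕ ((Bool × V) × ℕ) → Bool × V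
  | .inl (e, b) => (xor b t, s (xor b t) e)
  | .inr (w, _) => w

variable [Fintype V]

/-- If `A` has maximum degree at most `k`, a `k`-regular bipartite multigraph between two copies
of `Bool × V` (ends `regularizeEnd s false` and `regularizeEnd s true`): it contains the edges of
`A` twice, once in each direction, and `k - deg w` padding edges from `w` to its own copy. -/
def regularize (s : Bool → E → V) (A : Finset E) (k : ℕ) :
    Finset ((E × Bool) ⊕ ((Bool × V) × ℕ)) :=
  (A ×ˢ univ).disjSum {q ∈ univ ×ˢ range k | q.2 + #{e ∈ A | s q.1.1 e = q.1.2} < k}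

lemma card_filter_regularizeEnd {s : Bool → E → V} {A : Finset E} {k : ℕ}
    (hA : ∀ b x, #{e ∈ A | s b e = x} ≤ k) (t : Bool) (w : Bool × V) :
    #{a ∈ regularize s A k | regularizeEnd s t a = w} = k := by
  obtain ⟨b, x⟩ := w
  have hsplit : {a ∈ regularize s A k | regularizeEnd s t a = (b, x)} =
      ({e ∈ A | s b e = x} ×ˢ {xor b t}).disjSum
        ({(b, x)} ×ˢ range (k - #{e ∈ A | s b e = x})) := by
    ext (⟨e, b'⟩ | ⟨⟨b', x'⟩, j⟩)
    · cases b <;> cases b' <;> cases t <;> simp [regularize, regularizeEnd, and_comm]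
    · rw [mem_filter]
      simp only [regularize, regularizeEnd, inr_mem_disjSum, mem_filter, mem_product, mem_univ,
        mem_range, true_and, Prod.mk.injEq, mem_singleton]
      constructor
      · rintro ⟨⟨-, h⟩, rfl, rfl⟩
        exact ⟨⟨rfl, rfl⟩, by omega⟩
      · rintro ⟨⟨rfl, rfl⟩, h⟩
        exact ⟨⟨by omega, by omega⟩, rfl, rfl⟩
  rw [hsplit, card_disjSum, card_product, card_product, card_singleton, card_singleton,
    card_range]
  have := hA b x
  omega

theorem exists_matching_covering_of_card_fiber_le (s : Bool → E → V) (A : Finset E) {k : ℕ}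
    (hk : 0 < k) (hA : ∀ b x, #{e ∈ A | s b e = x} ≤ k) :
    ∃ M ⊆ A, (∀ b, Set.InjOn (s b) M) ∧
      ∀ b x, #{e ∈ A | s b e = x} = k → ∃ e ∈ M, s b e = x := by
  classical
  obtain ⟨g, hgA, hgP, hgQ⟩ := exists_perfect_matching_of_regular (regularizeEnd s false)
    (regularizeEnd s true) (regularize s A k) hk (card_filter_regularizeEnd hA false)
    fun w => (card_filter_regularizeEnd hA true w).le
  have hsurj : ∀ t w, ∃ u, regularizeEnd s t (g u) = w := by
    rintro (_ | _) w
    exacts [⟨w, hgP w⟩, hgQ.2 w]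
  -- the matching: edges whose forward copy lies in the perfect matching `g`
  refine ⟨{e ∈ A | ∃ w, g w = .inl (e, false)}, filter_subset _ _, ?_, ?_⟩
  · intro b e₁ he₁ e₂ he₂ h
    obtain ⟨-, w₁, hw₁⟩ := mem_filter.1 he₁
    obtain ⟨-, w₂, hw₂⟩ := mem_filter.1 he₂
    have : w₁ = w₂ := by
      cases b
      · rw [← hgP w₁, ← hgP w₂, hw₁, hw₂]
        simp [regularizeEnd, h]
      · apply hgQ.1
        simp [hw₁, hw₂, regularizeEnd, h]
    simpa [this, hw₂, eq_comm] using hw₁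
  · intro b x hx
    obtain ⟨u, hu⟩ := hsurj b (b, x)
    have hmem := hgA u
    rcases hgu : g u with ⟨e, b'⟩ | ⟨w, j⟩
    · rw [hgu] at hu hmem
      simp only [regularizeEnd, Prod.mk.injEq] at hu
      obtain ⟨hb, rfl⟩ := hu
      obtain rfl : b' = false := by cases b <;> simpa using hb
      refine ⟨e, mem_filter.2 ⟨?_, u, hgu⟩, by simp⟩
      simpa [regularize] using hmem
    · rw [hgu] at hu hmem
      simp only [regularizeEnd] at hu
      subst hu
      simp only [regularize, inr_mem_disjSum, mem_filter] at hmem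
      omega

variable [DecidableEq E]

lemma card_filter_sdiff_le {p : E → Prop} [DecidablePred p] {A M : Finset E} {k : ℕ}
    (hA : #{e ∈ A | p e} ≤ k + 1) (hM : #{e ∈ A | p e} = k + 1 → ∃ e ∈ M, p e)
    (hMA : M ⊆ A) : #{e ∈ A \ M | p e} ≤ k := by
  have hsub : {e ∈ A \ M | p e} ⊆ {e ∈ A | p e} := filter_subset_filter _ sdiff_subset
  by_cases h : #{e ∈ A | p e} = k + 1
  · obtain ⟨e, heM, hex⟩ := hM h
    have hlt := card_lt_card ((ssubset_iff_of_subset hsub).2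
      ⟨e, mem_filter.2 ⟨hMA heM, hex⟩, fun he => (mem_sdiff.1 (mem_filter.1 he).1).2 heM⟩)
    omega
  · have := card_le_card hsub
    omega

theorem exists_coloring_of_card_fiber_le (s : Bool → E → V) (k : ℕ) (A : Finset E)
    (hA : ∀ b x, #{e ∈ A | s b e = x} ≤ k) :
    ∃ c : E → ℕ, (∀ e ∈ A, c e < k) ∧
      ∀ e₁ ∈ A, ∀ e₂ ∈ A, e₁ ≠ e₂ → (∃ b, s b e₁ = s b e₂) → c e₁ ≠ c e₂ := by
  induction k generalizing A with
  | zero =>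
    obtain rfl : A = ∅ := eq_empty_of_forall_notMem fun e he =>
      (hA false (s false e)).not_gt (card_pos.2 ⟨e, mem_filter.2 ⟨he, rfl⟩⟩)
    exact ⟨0, by simp, by simp⟩
  | succ k ih =>
    obtain ⟨M, hMA, hMinj, hMcov⟩ :=
      exists_matching_covering_of_card_fiber_le s A k.succ_pos hA
    obtain ⟨c, hc, hc_proper⟩ :=
      ih (A \ M) fun b x => card_filter_sdiff_le (hA b x) (hMcov b x) hMA
    refine ⟨fun e => if e ∈ M then k else c e, fun e he => ?_, ?_⟩
    · dsimp only
      split_ifs with h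
      · omega
      · exact (hc e (mem_sdiff.2 ⟨he, h⟩)).trans k.lt_succ_self
    · rintro e₁ he₁ e₂ he₂ hne ⟨b, hb⟩
      by_cases h₁ : e₁ ∈ M <;> by_cases h₂ : e₂ ∈ M <;> simp only [h₁, h₂, if_true, if_false]
      · exact absurd (hMinj b h₁ h₂ hb) hne
      · exact (hc e₂ (mem_sdiff.2 ⟨he₂, h₂⟩)).ne'
      · exact (hc e₁ (mem_sdiff.2 ⟨he₁, h₁⟩)).ne
      · exact hc_proper e₁ (mem_sdiff.2 ⟨he₁, h₁⟩) e₂ (mem_sdiff.2 ⟨he₂, h₂⟩) hne ⟨b, hb⟩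

end Konig

section Split

variable [DecidableEq V] [DecidableEq E]

/-- `τ e` is half the position of `e` in its fibre: consecutive edges of a fibre are paired. -/
lemma exists_fiber_pairing {ι : Type*} [DecidableEq ι] (P : E → ι) (D : Finset E) :
    ∃ τ : E → Fin (#D + 1), (∀ e ∈ D, 2 * (τ e : ℕ) < #{e' ∈ D | P e' = P e}) ∧
      ∀ x j, #{e ∈ D | P e = x ∧ τ e = j} ≤ 2 := by
  let fiber (x : ι) : Finset E := {e' ∈ D | P e' = x}
  have mem_fiber : ∀ {x e}, e ∈ fiber x ↔ e ∈ D ∧ P e = x := mem_filter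
  let pos (x : ι) (e : E) : ℕ := if h : e ∈ fiber x then ((fiber x).equivFin ⟨e, h⟩ : ℕ) else 0
  have pos_lt : ∀ x, ∀ e ∈ fiber x, pos x e < #(fiber x) := by
    intro x e he
    simp only [pos, dif_pos he, Fin.is_lt]
  have pos_injOn : ∀ x, Set.InjOn (pos x) (fiber x) := by
    intro x e₁ h₁ e₂ h₂ h
    simp only [pos, dif_pos (mem_coe.1 h₁), dif_pos (mem_coe.1 h₂)] at h
    exact congrArg Subtype.val ((equivFin _).injective (Fin.ext h))
  have pos_le : ∀ x e, pos x e ≤ #D := by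
    intro x e
    by_cases he : e ∈ fiber x
    · exact (pos_lt x e he).le.trans (card_filter_le _ _)
    · simp only [pos, dif_neg he, zero_le]
  refine ⟨fun e => ⟨pos (P e) e / 2, by have := pos_le (P e) e; omega⟩, fun e he => ?_, ?_⟩
  · have : pos (P e) e < #(fiber (P e)) := pos_lt (P e) e (mem_fiber.2 ⟨he, rfl⟩)
    change 2 * (pos (P e) e / 2) < #(fiber (P e))
    omega
  · intro x j
    calc #{e ∈ D | P e = x ∧ _ = j}
        ≤ #({2 * (j : ℕ), 2 * (j : ℕ) + 1} : Finset ℕ) := by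
          refine card_le_card_of_injOn (pos x) (fun e he => ?_) fun e₁ h₁ e₂ h₂ h => ?_
          · obtain ⟨-, rfl, rfl⟩ := mem_filter.1 he
            simp only [coe_insert, coe_singleton, Set.mem_insert_iff, Set.mem_singleton_iff]
            omega
          · simp only [coe_filter] at h₁ h₂
            exact pos_injOn x (mem_fiber.2 ⟨h₁.1, h₁.2.1⟩) (mem_fiber.2 ⟨h₂.1, h₂.2.1⟩) h
      _ ≤ 2 := card_le_two

variable [Fintype V]

theorem exists_balanced_split (s : Bool → E → V) (D : Finset E) :
    ∃ C ⊆ D, ∀ b x, 2 * #{e ∈ C | s b e = x} ≤ #{e ∈ D | s b e = x} + 1 ∧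
      2 * #{e ∈ D \ C | s b e = x} ≤ #{e ∈ D | s b e = x} + 1 := by
  -- Splitting every vertex into the pairs of `exists_fiber_pairing` leaves maximum degree 2;
  -- a colour class of a 2-edge-colouring then takes at most one edge of each pair.
  choose τ hτ hτ_two using fun b => exists_fiber_pairing (s b) D
  obtain ⟨c, hc, hc_proper⟩ := exists_coloring_of_card_fiber_le (fun b e => (s b e, τ b e)) 2 D
    (by rintro b ⟨x, j⟩; simpa only [Prod.mk.injEq] using hτ_two b x j)
  have half : ∀ T ⊆ D, (∀ e₁ ∈ T, ∀ e₂ ∈ T, c e₁ = c e₂) →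
      ∀ b x, 2 * #{e ∈ T | s b e = x} ≤ #{e ∈ D | s b e = x} + 1 := by
    intro T hTD hTc b x
    have : #{e ∈ T | s b e = x} ≤ #(range ((#{e ∈ D | s b e = x} + 1) / 2)) := by
      refine card_le_card_of_injOn (fun e => (τ b e : ℕ)) (fun e he => ?_) fun e₁ h₁ e₂ h₂ h => ?_
      · obtain ⟨heT, rfl⟩ := mem_filter.1 he
        have := hτ b e (hTD heT)
        simp only [coe_range, Set.mem_Iio]
        omega
      · simp only [coe_filter] at h₁ h₂
        by_contra hne
        refine hc_proper e₁ (hTD h₁.1) e₂ (hTD h₂.1) hne ⟨b, ?_⟩ (hTc e₁ h₁.1 e₂ h₂.1)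
        simp only [Prod.mk.injEq, h₁.2, h₂.2, true_and]
        exact Fin.ext h
    rw [card_range] at this
    omega
  refine ⟨{e ∈ D | c e = 0}, filter_subset _ _, fun b x =>
    ⟨half _ (filter_subset _ _) ?_ b x, half _ sdiff_subset ?_ b x⟩⟩
  · intro e₁ h₁ e₂ h₂
    rw [(mem_filter.1 h₁).2, (mem_filter.1 h₂).2]
  · intro e₁ h₁ e₂ h₂
    simp only [mem_sdiff, mem_filter, not_and] at h₁ h₂
    have := hc e₁ h₁.1
    have := hc e₂ h₂.1
    have := h₁.2 h₁.1
    have := h₂.2 h₂.1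
    omega

lemma card_inter_union_le {A B C : Finset E} {k : ℕ} (hC : C ⊆ (A ∪ B) \ (A ∩ B))
    (hC_card : 2 * #C ≤ #((A ∪ B) \ (A ∩ B)) + 1) (hAB : #A + #B ≤ 2 * k) :
    #(A ∩ B ∪ C) ≤ k := by
  have := card_union_add_card_inter A B
  have := card_sdiff_add_card_eq_card (inter_subset_union : A ∩ B ⊆ A ∪ B)
  have := card_union_of_disjoint (disjoint_sdiff.mono_right hC : Disjoint (A ∩ B) C)
  omega

theorem exists_card_fiber_le_card_add_card_eq (s : Bool → E → V) (A B : Finset E) (k : ℕ)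
    (hAB : ∀ b x, #{e ∈ A | s b e = x} + #{e ∈ B | s b e = x} ≤ 2 * k) :
    ∃ X Y : Finset E, (∀ b x, #{e ∈ X | s b e = x} ≤ k) ∧ (∀ b x, #{e ∈ Y | s b e = x} ≤ k) ∧
      #X + #Y = #A + #B := by
  set D := (A ∪ B) \ (A ∩ B)
  obtain ⟨C, hCD, hC⟩ := exists_balanced_split s D
  have fiber_le : ∀ T ⊆ D, (∀ b x, 2 * #{e ∈ T | s b e = x} ≤ #{e ∈ D | s b e = x} + 1) →
      ∀ b x, #{e ∈ A ∩ B ∪ T | s b e = x} ≤ k := by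
    intro T hTD hT b x
    have hD : {e ∈ D | s b e = x} = ({e ∈ A | s b e = x} ∪ {e ∈ B | s b e = x}) \
        ({e ∈ A | s b e = x} ∩ {e ∈ B | s b e = x}) := by
      ext e
      simp only [D, mem_filter, mem_sdiff, mem_union, mem_inter]
      tauto
    have hT' := hT b x
    rw [hD] at hT'
    rw [filter_union, filter_inter_distrib]
    exact card_inter_union_le (hD ▸ filter_subset_filter _ hTD) hT' (hAB b x)
  refine ⟨A ∩ B ∪ C, A ∩ B ∪ (D \ C), fiber_le C hCD fun b x => (hC b x).1,
    fiber_le _ sdiff_subset fun b x => (hC b x).2, ?_⟩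
  have hdisj : Disjoint (A ∩ B) D := disjoint_sdiff
  rw [card_union_of_disjoint (hdisj.mono_right hCD),
    card_union_of_disjoint (hdisj.mono_right sdiff_subset)]
  have h₁ : #(D \ C) + #C = #D := card_sdiff_add_card_eq_card hCD
  have h₂ : #D + #(A ∩ B) = #(A ∪ B) := card_sdiff_add_card_eq_card inter_subset_union
  have h₃ := card_union_add_card_inter A B
  omega

end Split

lemma IsBipartite.exists_sides {ends : E → Sym2 V} (h : IsBipartite ends) :
    ∃ s : Bool → E → V, ∀ e₁ e₂, (∃ v, v ∈ ends e₁ ∧ v ∈ ends e₂) ↔ ∃ b, s b e₁ = s b e₂ := by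
  obtain ⟨f, hf⟩ := h
  have : ∀ e, ∃ u v, ends e = s(u, v) ∧ f u = false ∧ f v = true := by
    intro e
    obtain ⟨⟨u, v⟩, huv⟩ := Sym2.mk_surjective (ends e)
    have hne := hf e u v huv.symm
    cases hu : f u <;> cases hv : f v <;> simp only [hu, hv, ne_eq, not_true_eq_false] at hne
    · exact ⟨u, v, huv.symm, hu, hv⟩
    · exact ⟨v, u, huv.symm.trans Sym2.eq_swap, hv, hu⟩
  choose u v hends hu hv using this
  let s (b : Bool) (e : E) : V := if b then v e else u e
  have s_mem : ∀ b e, s b e ∈ ends e := by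
    intro b e
    cases b <;> simp [s, hends]
  have s_f : ∀ e w, w ∈ ends e → s (f w) e = w := by
    intro e w hw
    rw [hends, Sym2.mem_iff] at hw
    rcases hw with rfl | rfl <;> simp [s, hu, hv]
  refine ⟨s, fun e₁ e₂ => ⟨fun ⟨w, h₁, h₂⟩ => ⟨f w, (s_f e₁ w h₁).trans (s_f e₂ w h₂).symm⟩,
    fun ⟨b, hb⟩ => ⟨s b e₁, s_mem b e₁, hb ▸ s_mem b e₂⟩⟩⟩

lemma edgeColorable_iff_card_fiber_le [DecidableEq V] [Fintype V] [DecidableEq E]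
    {ends : E → Sym2 V} {s : Bool → E → V}
    (hs : ∀ e₁ e₂, (∃ v, v ∈ ends e₁ ∧ v ∈ ends e₂) ↔ ∃ b, s b e₁ = s b e₂)
    (A : Finset E) (m : ℕ) :
    EdgeColorable ends A m ↔ ∀ b x, #{e ∈ A | s b e = x} ≤ m := by
  simp only [EdgeColorable, hs]
  refine ⟨fun ⟨c, hc, hc_proper⟩ b x => ?_, exists_coloring_of_card_fiber_le s m A⟩
  calc #{e ∈ A | s b e = x}
      ≤ #(range m) := by
        refine card_le_card_of_injOn c (fun e he => ?_) fun e₁ h₁ e₂ h₂ h => ?_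
        · simpa using hc e (mem_filter.1 he).1
        · simp only [coe_filter] at h₁ h₂
          by_contra hne
          exact hc_proper e₁ h₁.1 e₂ h₂.1 hne ⟨b, h₁.2.trans h₂.2.symm⟩ h
    _ = m := card_range m

section Nu
variable [Fintype E]

lemma bddAbove_card_edgeColorable (ends : E → Sym2 V) (k : ℕ) :
    BddAbove {n | ∃ F : Finset E, F ⊆ univ ∧ EdgeColorable ends F k ∧ #F = n} :=
  ⟨Fintype.card E, by rintro _ ⟨F, -, -, rfl⟩; exact card_le_univ F⟩

lemma exists_edgeColorable_card_eq_nu (ends : E → Sym2 V) (k : ℕ) :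
    ∃ F : Finset E, EdgeColorable ends F k ∧ #F = nu ends univ k := by
  obtain ⟨F, -, hF, hcard⟩ :
      nu ends univ k ∈ {n | ∃ F : Finset E, F ⊆ univ ∧ EdgeColorable ends F k ∧ #F = n} :=
    Nat.sSup_mem ⟨0, ∅, empty_subset _, ⟨0, by simp, by simp⟩, rfl⟩
      (bddAbove_card_edgeColorable ends k)
  exact ⟨F, hF, hcard⟩

lemma card_le_nu {ends : E → Sym2 V} {F : Finset E} {k : ℕ} (hF : EdgeColorable ends F k) :
    #F ≤ nu ends univ k :=
  le_csSup (bddAbove_card_edgeColorable ends k) ⟨F, subset_univ F, hF, rfl⟩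

end Nu

theorem stmt_10_general [Fintype V] [Fintype E] [DecidableEq V] (ends : E → Sym2 V)
    (hbip : IsBipartite ends) (k i : ℕ) (hik : i ≤ k) :
    2 * nu ends (Finset.univ : Finset E) k ≥
      nu ends (Finset.univ : Finset E) (k - i) +
        nu ends (Finset.univ : Finset E) (k + i) := by
  classical
  obtain ⟨s, hs⟩ := hbip.exists_sides
  obtain ⟨A, hA, hA_card⟩ := exists_edgeColorable_card_eq_nu ends (k - i)
  obtain ⟨B, hB, hB_card⟩ := exists_edgeColorable_card_eq_nu ends (k + i)
  rw [edgeColorable_iff_card_fiber_le hs] at hA hB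
  obtain ⟨X, Y, hX, hY, hXY⟩ := exists_card_fiber_le_card_add_card_eq s A B k fun b x => by
    have := hA b x
    have := hB b x
    omega
  have := card_le_nu ((edgeColorable_iff_card_fiber_le hs X k).2 hX)
  have := card_le_nu ((edgeColorable_iff_card_fiber_le hs Y k).2 hY)
  omega

/-- For a finite bipartite loopless multigraph `G`, `k ≥ 0` and `0 ≤ i ≤ k`:
`2 ν_k(G) ≥ ν_{k-i}(G) + ν_{k+i}(G)`. -/
theorem stmt_10 [Fintype V] [Fintype E] [DecidableEq V] (ends : E → Sym2 V)
    (hloop : ∀ e : E, ¬ (ends e).IsDiag) (hbip : IsBipartite ends)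
    (k i : ℕ) (hik : i ≤ k) :
    2 * nu ends (Finset.univ : Finset E) k ≥
      nu ends (Finset.univ : Finset E) (k - i) +
        nu ends (Finset.univ : Finset E) (k + i) :=
  stmt_10_general ends hbip k i hik
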